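/- Under the assumptions that all rows of P̄ are identical and that states 0 and N+1 are absorbing under P_2, and that additionally the emission distributions of states 1,...,N are all arbitrary but the predicted probabilities of states 1,...,N collapse to s·p_i with s = 1 − π(0) − π(N+1) (belief restricted to the simplex with π(A)=0), the Bayes-updated probabilities π'(0) and π'(N+1) after observing y are functions only of (π(0), π(N+1), y); i.e., if two beliefs π and π̃ on {0,1,...,N+1} satisfy π(0)=π̃(0) and π(N+1)=π̃(N+1), then T(π,y)(0)=T(π̃,y)(0) and T(π,y)(N+1)=T(π̃,y)(N+1) for all observations y. -/
import Mathlib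


open Finset

/-- States {0, 1, ..., N+1}: `lo` is state 0, `mid i` are states 1,...,N, `hi` is state N+1. -/
inductive St (N : ℕ) : Type
  | lo : St N
  | mid : Fin N → St N
  | hi : St N
  deriving DecidableEq, Fintype

/-- Bayes belief update T(π,y)(j) = B_j(y)·(P₂ᵀπ)(j) / Σₖ B_k(y)·(P₂ᵀπ)(k). -/
noncomputable def bayesT {N : ℕ} {Y : Type*} [Fintype Y] (B : St N → Y → ℝ)
    (P2 : St N → St N → ℝ) (π : St N → ℝ) (y : Y) : St N → ℝ :=
  fun j => B j y * (∑ i, π i * P2 i j) / ∑ k, B k y * (∑ i, π i * P2 i k)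

def stEquiv (N : ℕ) : St N ≃ (Fin N ⊕ Bool) where
  toFun s := match s with
    | St.lo => Sum.inr false
    | St.mid i => Sum.inl i
    | St.hi => Sum.inr true
  invFun s := match s with
    | Sum.inr false => St.lo
    | Sum.inl i => St.mid i
    | Sum.inr true => St.hi
  left_inv s := by cases s <;> rfl
  right_inv s := by
    rcases s with i | b
    · rfl
    · cases b <;> rfl

lemma sum_st {N : ℕ} (f : St N → ℝ) :
    ∑ i, f i = f St.lo + f St.hi + ∑ i : Fin N, f (St.mid i) := by
  rw [← Equiv.sum_comp (stEquiv N).symm f, Fintype.sum_sum_type, Fintype.sum_bool]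
  simp [stEquiv]
  ring

/-- Under the identical-rows assumption on P̄ and absorbing states 0 and N+1, the
Bayes-updated probabilities of states 0 and N+1 depend on the belief only through
(π(0), π(N+1)): if two beliefs agree at states 0 and N+1, so do their Bayes updates
at states 0 and N+1, for every observation y. -/
theorem stmt3 {N : ℕ} {Y : Type*} [Fintype Y]
    (p : St N → ℝ) (hpnn : ∀ j, 0 ≤ p j) (hpsum : ∑ j, p j = 1)
    (P2 : St N → St N → ℝ)
    (hrowLo : ∀ j, P2 St.lo j = if j = St.lo then 1 else 0)
    (hrowHi : ∀ j, P2 St.hi j = if j = St.hi then 1 else 0)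
    (hrowMid : ∀ i j, P2 (St.mid i) j = p j)
    (B : St N → Y → ℝ) (hB : ∀ j y, 0 < B j y)
    (π πt : St N → ℝ)
    (hπnn : ∀ i, 0 ≤ π i) (hπsum : ∑ i, π i = 1)
    (hπtnn : ∀ i, 0 ≤ πt i) (hπtsum : ∑ i, πt i = 1)
    (hlo : π St.lo = πt St.lo) (hhi : π St.hi = πt St.hi) :
    ∀ y : Y, bayesT B P2 π y St.lo = bayesT B P2 πt y St.lo ∧
      bayesT B P2 π y St.hi = bayesT B P2 πt y St.hi := by
  have hmid : ∑ i : Fin N, π (St.mid i) = ∑ i : Fin N, πt (St.mid i) := by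
    have h1 := hπsum; have h2 := hπtsum
    rw [sum_st] at h1 h2
    linarith
  have key : ∀ j, ∑ i, π i * P2 i j = ∑ i, πt i * P2 i j := by
    intro j
    rw [sum_st (fun i => π i * P2 i j), sum_st (fun i => πt i * P2 i j)]
    simp only [hrowMid, ← Finset.sum_mul, hmid, hlo, hhi]
  intro y
  constructor <;> · unfold bayesT
                    rw [key]
                    congr 1
                    exact Finset.sum_congr rfl fun k _ => by rw [key]
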